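/- arXiv:2012.03486 — 2 statements merged into one kernel-verified Lean document; each statement's English description precedes it below -/
import Mathlib

section
/- Fix a positive definite matrix M. For any subsets A, B ⊆ {1,...,n} with A ≠ B, the subspaces H_A and H_B of square-integrable R^q-valued random vectors of the form g(X_i : i ∈ A) with E[g] = 0 and with all conditional expectations onto proper subsets vanishing, are orthogonal with respect to the inner product ⟨X,Y⟩ = E[Xᵀ M Y], when X_1,...,X_n are independent. -/
/-!
Reduce to scalar components `f = gA r`, `g = gB s` and assume, after swapping `A` and `B`, that
`A ⊄ B`, so that `A ∩ B ⊊ A` and `E[f | σ(A ∩ B)] = 0`. The variable `g` is measurable for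
`σ(A ∩ B) ⊔ σ(B \ A)`, and `σ(B \ A)` is independent of `σ(A)`. Adjoining a σ-algebra independent
of `σ(A)` does not change the conditional expectation of the `σ(A)`-measurable `f`, so
`E[f | σ(A ∩ B) ⊔ σ(B \ A)] = 0` and `E[f g] = E[g E[f | σ(A ∩ B) ⊔ σ(B \ A)]] = 0`.
-/

open MeasureTheory ProbabilityTheory Finset Matrix

section SetIntegral

variable {Ω F : Type*} [NormedAddCommGroup F] [NormedSpace ℝ F] {m mΩ : MeasurableSpace Ω}
  {μ : Measure Ω} {C : Set (Set Ω)} {f g : Ω → F}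

theorem setIntegral_eq_of_isPiSystem (hm : m ≤ mΩ) (hgen : m = MeasurableSpace.generateFrom C)
    (hC : IsPiSystem C) (hf : Integrable f μ) (hg : Integrable g μ)
    (h_univ : ∫ x, f x ∂μ = ∫ x, g x ∂μ) (h_C : ∀ s ∈ C, ∫ x in s, f x ∂μ = ∫ x in s, g x ∂μ)
    {s : Set Ω} (hs : MeasurableSet[m] s) : ∫ x in s, f x ∂μ = ∫ x in s, g x ∂μ := by
  induction s, hs using MeasurableSpace.induction_on_inter hgen hC with
  | empty => simp
  | basic s hs => exact h_C s hs
  | compl s hs ih =>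
    rw [setIntegral_compl (hm s hs) hf, setIntegral_compl (hm s hs) hg, ih, h_univ]
  | iUnion s hdisj hs ih =>
    rw [integral_iUnion (fun i => hm _ (hs i)) hdisj hf.integrableOn,
      integral_iUnion (fun i => hm _ (hs i)) hdisj hg.integrableOn]
    exact tsum_congr ih

end SetIntegral

namespace MeasurableSpace

variable {Ω : Type*} {m₁ m₂ : MeasurableSpace Ω}

theorem sup_eq_generateFrom_image2_inter :
    m₁ ⊔ m₂ =
      generateFrom (Set.image2 (· ∩ ·) {s | MeasurableSet[m₁] s} {t | MeasurableSet[m₂] t}) := by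
  refine le_antisymm (sup_le (fun s hs => ?_) (fun t ht => ?_)) (generateFrom_le ?_)
  · exact measurableSet_generateFrom ⟨s, hs, Set.univ, MeasurableSet.univ, Set.inter_univ s⟩
  · exact measurableSet_generateFrom ⟨Set.univ, MeasurableSet.univ, t, ht, Set.univ_inter t⟩
  · rintro _ ⟨s, hs, t, ht, rfl⟩
    exact (le_sup_left (b := m₂) s hs).inter (le_sup_right (a := m₁) t ht)

theorem isPiSystem_image2_inter :
    IsPiSystem (Set.image2 (· ∩ ·) {s | MeasurableSet[m₁] s} {t | MeasurableSet[m₂] t}) := by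
  rintro _ ⟨s₁, hs₁, t₁, ht₁, rfl⟩ _ ⟨s₂, hs₂, t₂, ht₂, rfl⟩ -
  exact ⟨s₁ ∩ s₂, hs₁.inter hs₂, t₁ ∩ t₂, ht₁.inter ht₂, Set.inter_inter_inter_comm _ _ _ _⟩

end MeasurableSpace

namespace ProbabilityTheory

variable {Ω : Type*} {m' m₁ m₂ : MeasurableSpace Ω} [mΩ : MeasurableSpace Ω] {μ : Measure Ω}
  [IsFiniteMeasure μ] {f g : Ω → ℝ}

theorem Indep.setIntegral_inter_eq_mul (hindep : Indep m₁ m₂ μ) (hm₁ : m₁ ≤ mΩ) (hm₂ : m₂ ≤ mΩ)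
    (hfm : StronglyMeasurable[m₁] f) {s t : Set Ω} (hs : MeasurableSet[m₁] s)
    (ht : MeasurableSet[m₂] t) :
    ∫ x in s ∩ t, f x ∂μ = (∫ x in s, f x ∂μ) * μ.real t := by
  have hst : IndepFun (s.indicator f) (t.indicator fun _ => (1 : ℝ)) μ := by
    rw [IndepFun_iff_Indep]
    exact indep_of_indep_of_le_right (indep_of_indep_of_le_left hindep
      (hfm.measurable.indicator hs).comap_le) (measurable_const.indicator ht).comap_le
  calc ∫ x in s ∩ t, f x ∂μ
      = ∫ x, s.indicator f x * t.indicator (fun _ => (1 : ℝ)) x ∂μ := by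
        rw [← integral_indicator ((hm₁ s hs).inter (hm₂ t ht))]
        congr 1 with x
        by_cases hxs : x ∈ s <;> by_cases hxt : x ∈ t <;> simp [hxs, hxt]
    _ = (∫ x, s.indicator f x ∂μ) * ∫ x, t.indicator (fun _ => (1 : ℝ)) x ∂μ :=
        hst.integral_fun_mul_eq_mul_integral
          ((hfm.mono hm₁).indicator (hm₁ s hs)).aestronglyMeasurable
          ((integrable_const 1).indicator (hm₂ t ht)).aestronglyMeasurable
    _ = (∫ x in s, f x ∂μ) * μ.real t := by
        rw [integral_indicator (hm₁ s hs), integral_indicator (hm₂ t ht), setIntegral_const,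
          smul_eq_mul, mul_one]

theorem condExp_sup_indep_eq (hm' : m' ≤ m₁) (hm₁ : m₁ ≤ mΩ) (hm₂ : m₂ ≤ mΩ)
    (hindep : Indep m₁ m₂ μ) (hf : Integrable f μ) (hfm : StronglyMeasurable[m₁] f) :
    μ[f | m' ⊔ m₂] =ᵐ[μ] μ[f | m'] := by
  have hle : m' ⊔ m₂ ≤ mΩ := sup_le (hm'.trans hm₁) hm₂
  refine (ae_eq_condExp_of_forall_setIntegral_eq hle hf
    (fun s _ _ => integrable_condExp.integrableOn) (fun s hs _ => ?_)
    ⟨_, stronglyMeasurable_condExp.mono le_sup_left, .rfl⟩).symm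
  refine setIntegral_eq_of_isPiSystem hle MeasurableSpace.sup_eq_generateFrom_image2_inter
    MeasurableSpace.isPiSystem_image2_inter integrable_condExp hf
    (integral_condExp (hm'.trans hm₁)) ?_ hs
  rintro _ ⟨s, hs, t, ht, rfl⟩
  rw [hindep.setIntegral_inter_eq_mul hm₁ hm₂ hfm (hm' s hs) ht,
    hindep.setIntegral_inter_eq_mul hm₁ hm₂ (stronglyMeasurable_condExp.mono hm') (hm' s hs) ht,
    setIntegral_condExp (hm'.trans hm₁) hf hs]

theorem integral_mul_eq_zero_of_condExp_eq_zero (hm' : m' ≤ m₁) (hm₁ : m₁ ≤ mΩ) (hm₂ : m₂ ≤ mΩ)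
    (hindep : Indep m₁ m₂ μ) (hf : MemLp f 2 μ) (hg : MemLp g 2 μ)
    (hfm : StronglyMeasurable[m₁] f) (hgm : StronglyMeasurable[m' ⊔ m₂] g)
    (hf_proj : μ[f | m'] =ᵐ[μ] 0) :
    ∫ x, f x * g x ∂μ = 0 := by
  have hf₁ : Integrable f μ := hf.integrable one_le_two
  have hcond : μ[f | m' ⊔ m₂] =ᵐ[μ] 0 :=
    (condExp_sup_indep_eq hm' hm₁ hm₂ hindep hf₁ hfm).trans hf_proj
  calc ∫ x, f x * g x ∂μ = ∫ x, (g * f) x ∂μ := by simp_rw [Pi.mul_apply, mul_comm]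
    _ = ∫ x, (μ[g * f | m' ⊔ m₂]) x ∂μ := (integral_condExp (sup_le (hm'.trans hm₁) hm₂)).symm
    _ = ∫ x, (g * μ[f | m' ⊔ m₂]) x ∂μ :=
        integral_congr_ae (condExp_mul_of_stronglyMeasurable_left hgm (hg.integrable_mul hf) hf₁)
    _ = 0 := by
        rw [integral_congr_ae (hcond.mul_left (f₃ := g))]
        simp

theorem integral_mul_eq_zero_of_iIndep {ι : Type*} [DecidableEq ι] {m : ι → MeasurableSpace Ω}
    (hm : ∀ i, m i ≤ mΩ) (hindep : iIndep m μ) {A B : Finset ι}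
    (hf : MemLp f 2 μ) (hg : MemLp g 2 μ)
    (hfm : Measurable[⨆ i ∈ A, m i] f) (hgm : Measurable[⨆ i ∈ B, m i] g)
    (hf_proj : μ[f | ⨆ i ∈ A ∩ B, m i] =ᵐ[μ] 0) :
    ∫ x, f x * g x ∂μ = 0 := by
  have hB : ⨆ i ∈ B, m i ≤ (⨆ i ∈ A ∩ B, m i) ⊔ ⨆ i ∈ B \ A, m i := by
    refine iSup₂_le fun i hi => ?_
    by_cases hiA : i ∈ A
    · exact le_sup_of_le_left (le_biSup m (mem_inter.2 ⟨hiA, hi⟩))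
    · exact le_sup_of_le_right (le_biSup m (mem_sdiff.2 ⟨hi, hiA⟩))
  have hAB : Indep (⨆ i ∈ A, m i) (⨆ i ∈ B \ A, m i) μ := by
    simpa using indep_iSup_of_disjoint hm hindep (S := (A : Set ι)) (T := ↑(B \ A))
      (disjoint_coe.2 disjoint_sdiff)
  have hAB_le : ⨆ i ∈ A ∩ B, m i ≤ ⨆ i ∈ A, m i := biSup_mono fun i hi => (mem_inter.1 hi).1
  have hgm' : StronglyMeasurable[(⨆ i ∈ A ∩ B, m i) ⊔ ⨆ i ∈ B \ A, m i] g :=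
    (hgm.mono hB le_rfl).stronglyMeasurable
  exact integral_mul_eq_zero_of_condExp_eq_zero hAB_le
    (iSup₂_le fun i _ => hm i) (iSup₂_le fun i _ => hm i) hAB hf hg hfm.stronglyMeasurable
    hgm' hf_proj

end ProbabilityTheory

theorem integral_dotProduct_mulVec {Ω ι : Type*} [MeasurableSpace Ω] [Fintype ι]
    {μ : Measure Ω} (M : Matrix ι ι ℝ) {u v : Ω → ι → ℝ}
    (huv : ∀ r s, Integrable (fun ω => u ω r * v ω s) μ) :
    ∫ ω, u ω ⬝ᵥ (M *ᵥ v ω) ∂μ = ∑ r, ∑ s, M r s * ∫ ω, u ω r * v ω s ∂μ := by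
  have hexpand : ∀ ω, u ω ⬝ᵥ (M *ᵥ v ω) = ∑ r, ∑ s, M r s * (u ω r * v ω s) := fun ω => by
    simp only [dotProduct, mulVec, Finset.mul_sum]
    exact Finset.sum_congr rfl fun r _ => Finset.sum_congr rfl fun s _ => by ring
  calc ∫ ω, u ω ⬝ᵥ (M *ᵥ v ω) ∂μ = ∫ ω, ∑ r, ∑ s, M r s * (u ω r * v ω s) ∂μ :=
        integral_congr_ae (.of_forall hexpand)
    _ = ∑ r, ∫ ω, ∑ s, M r s * (u ω r * v ω s) ∂μ :=
        integral_finsetSum _ fun r _ => integrable_finsetSum _ fun s _ => (huv r s).const_mul _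
    _ = ∑ r, ∑ s, ∫ ω, M r s * (u ω r * v ω s) ∂μ :=
        Finset.sum_congr rfl fun r _ => integral_finsetSum _ fun s _ => (huv r s).const_mul _
    _ = ∑ r, ∑ s, M r s * ∫ ω, u ω r * v ω s ∂μ := by simp only [integral_const_mul]

theorem stmt4_general {Ω E : Type*} [mΩ : MeasurableSpace Ω] [MeasurableSpace E]
    (μ : Measure Ω) [IsProbabilityMeasure μ] (n q : ℕ)
    (M : Matrix (Fin q) (Fin q) ℝ)
    (X : Fin n → Ω → E) (hXmeas : ∀ i, Measurable (X i))
    (hindep : iIndepFun X μ)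
    (A B : Finset (Fin n)) (hAB : A ≠ B)
    (gA gB : Ω → Fin q → ℝ)
    (hgA2 : ∀ r : Fin q, MemLp (fun ω => gA ω r) 2 μ)
    (hgB2 : ∀ r : Fin q, MemLp (fun ω => gB ω r) 2 μ)
    (hgAmeas : ∀ r : Fin q,
      Measurable[⨆ i ∈ A, MeasurableSpace.comap (X i) inferInstance] (fun ω => gA ω r))
    (hgBmeas : ∀ r : Fin q,
      Measurable[⨆ i ∈ B, MeasurableSpace.comap (X i) inferInstance] (fun ω => gB ω r))
    (hgAproj : ∀ A' : Finset (Fin n), A' ⊂ A → ∀ r : Fin q,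
      μ[(fun ω => gA ω r) | ⨆ i ∈ A', MeasurableSpace.comap (X i) inferInstance]
        =ᵐ[μ] fun _ => (0 : ℝ))
    (hgBproj : ∀ B' : Finset (Fin n), B' ⊂ B → ∀ r : Fin q,
      μ[(fun ω => gB ω r) | ⨆ i ∈ B', MeasurableSpace.comap (X i) inferInstance]
        =ᵐ[μ] fun _ => (0 : ℝ)) :
    ∫ ω, (gA ω) ⬝ᵥ (M *ᵥ gB ω) ∂μ = 0 := by
  have hm i : MeasurableSpace.comap (X i) inferInstance ≤ mΩ := (hXmeas i).comap_le
  have horth r s : ∫ ω, gA ω r * gB ω s ∂μ = 0 := by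
    by_cases hAB_sub : A ⊆ B
    · have hBA : B ∩ A = A := inter_eq_right.2 hAB_sub
      have hBA_ssub : B ∩ A ⊂ B := by rw [hBA]; exact ssubset_of_subset_of_ne hAB_sub hAB
      rw [← integral_mul_eq_zero_of_iIndep hm hindep.iIndep (hgB2 s) (hgA2 r) (hgBmeas s)
        (hgAmeas r) (hgBproj _ hBA_ssub s)]
      simp_rw [mul_comm]
    · exact integral_mul_eq_zero_of_iIndep hm hindep.iIndep (hgA2 r) (hgB2 s) (hgAmeas r)
        (hgBmeas s) (hgAproj _ (inf_lt_left.2 hAB_sub) r)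
  rw [integral_dotProduct_mulVec M fun r s => (hgA2 r).integrable_mul (hgB2 s)]
  simp [horth]

/-- For independent `X_1, ..., X_n` and `A ≠ B`, the spaces `H_A`, `H_B` of square-integrable
`ℝ^q`-valued random vectors that are functions of `(X_i : i ∈ A)` (resp. `B`) whose conditional
expectations onto every proper subset vanish, are orthogonal for `⟨X, Y⟩ = E[Xᵀ M Y]`,
`M` positive definite. -/
theorem stmt4 {Ω E : Type*} [mΩ : MeasurableSpace Ω] [MeasurableSpace E]
    (μ : Measure Ω) [IsProbabilityMeasure μ] (n q : ℕ)
    (M : Matrix (Fin q) (Fin q) ℝ) (hM : M.PosDef)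
    (X : Fin n → Ω → E) (hXmeas : ∀ i, Measurable (X i))
    (hindep : iIndepFun X μ)
    (A B : Finset (Fin n)) (hAB : A ≠ B)
    (gA gB : Ω → Fin q → ℝ)
    (hgA2 : ∀ r : Fin q, MemLp (fun ω => gA ω r) 2 μ)
    (hgB2 : ∀ r : Fin q, MemLp (fun ω => gB ω r) 2 μ)
    (hgAmeas : ∀ r : Fin q,
      Measurable[⨆ i ∈ A, MeasurableSpace.comap (X i) inferInstance] (fun ω => gA ω r))
    (hgBmeas : ∀ r : Fin q,
      Measurable[⨆ i ∈ B, MeasurableSpace.comap (X i) inferInstance] (fun ω => gB ω r))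
    (hgAproj : ∀ A' : Finset (Fin n), A' ⊂ A → ∀ r : Fin q,
      μ[(fun ω => gA ω r) | ⨆ i ∈ A', MeasurableSpace.comap (X i) inferInstance]
        =ᵐ[μ] fun _ => (0 : ℝ))
    (hgBproj : ∀ B' : Finset (Fin n), B' ⊂ B → ∀ r : Fin q,
      μ[(fun ω => gB ω r) | ⨆ i ∈ B', MeasurableSpace.comap (X i) inferInstance]
        =ᵐ[μ] fun _ => (0 : ℝ)) :
    ∫ ω, (gA ω) ⬝ᵥ (M *ᵥ gB ω) ∂μ = 0 :=
  stmt4_general (mΩ := mΩ) μ n q M X hXmeas hindep A B hAB gA gB hgA2 hgB2 hgAmeas hgBmeas hgAproj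
    hgBproj
end

section
/- Let (A_n) and (B_n) be sequences of q×q matrices with uniformly bounded entries such that: the diagonal entries satisfy B_{ii} > δ for some fixed δ > 0, A_{ii} ≥ B_{ii}/log n, and all off-diagonal entries of A_n are o(1/log n). Then det(A_n) is asymptotically of the same order as the product of the diagonal entries of A_n, i.e., there exist constants c, c' > 0 such that c·∏_i A_{ii} ≤ |det A_n| ≤ c'·∏_i A_{ii} for all large n. -/
open Filter Matrix

/-- If `(A_n)`, `(B_n)` are `q×q` matrices with uniformly bounded entries, `B_n` has diagonal
entries bounded below by `δ > 0`, `(A_n)_{ii} ≥ (B_n)_{ii} / log n`, and the off-diagonal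
entries of `A_n` are `o(1/log n)`, then `|det A_n|` is of the same order as `∏_i (A_n)_{ii}`. -/
theorem stmt7 (q : ℕ) (A B : ℕ → Matrix (Fin q) (Fin q) ℝ)
    (C : ℝ) (hbound : ∀ n (i j : Fin q), |A n i j| ≤ C ∧ |B n i j| ≤ C)
    (δ : ℝ) (hδ : 0 < δ) (hBdiag : ∀ n (i : Fin q), δ < B n i i)
    (hAdiag : ∀ᶠ n in atTop, ∀ i : Fin q, B n i i / Real.log n ≤ A n i i)
    (hoffdiag : ∀ i j : Fin q, i ≠ j →
      Tendsto (fun n => A n i j * Real.log n) atTop (nhds 0)) :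
    ∃ c c' : ℝ, 0 < c ∧ 0 < c' ∧ ∀ᶠ n in atTop,
      c * ∏ i, A n i i ≤ |(A n).det| ∧ |(A n).det| ≤ c' * ∏ i, A n i i := by
  classical
  set r : ℝ := 1 / (2 * (q.factorial + 1)) with hr_def
  have hfacpos : (0:ℝ) < (q.factorial : ℝ) + 1 := by positivity
  have hr0 : 0 < r := by rw [hr_def]; positivity
  have hr1 : r ≤ 1 := by
    rw [hr_def, div_le_one (by positivity)]
    have : (0:ℝ) ≤ (q.factorial : ℝ) := Nat.cast_nonneg _
    nlinarith
  have hfac : (q.factorial : ℝ) * r ≤ 1 / 2 := by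
    rw [hr_def, mul_one_div, div_le_div_iff₀ (by positivity) (by norm_num)]
    nlinarith [Nat.cast_nonneg (α := ℝ) q.factorial]
  have hlog : ∀ᶠ n : ℕ in atTop, 1 ≤ Real.log n :=
    (Real.tendsto_log_atTop.comp tendsto_natCast_atTop_atTop).eventually_ge_atTop 1
  have hoff : ∀ᶠ n in atTop, ∀ i j : Fin q, i ≠ j → |A n i j * Real.log n| ≤ δ * r := by
    rw [eventually_all]; intro i
    rw [eventually_all]; intro j
    by_cases hij : i = j
    · exact Eventually.of_forall fun n h => absurd hij h
    · have h0 := (hoffdiag i j hij).abs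
      rw [abs_zero] at h0
      filter_upwards [h0.eventually_lt_const (by positivity : (0:ℝ) < δ * r)] with n hn _
      exact hn.le
  refine ⟨1/2, 3/2, by norm_num, by norm_num, ?_⟩
  filter_upwards [hAdiag, hlog, hoff] with n hA hL hO
  set L := Real.log n with hLdef
  have hL0 : 0 < L := lt_of_lt_of_le zero_lt_one hL
  have hdiag : ∀ i, δ / L ≤ A n i i := fun i =>
    le_trans ((div_le_div_iff_of_pos_right hL0).mpr (hBdiag n i).le) (hA i)
  have hdpos : ∀ i, 0 < A n i i := fun i => lt_of_lt_of_le (by positivity) (hdiag i)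
  set P : ℝ := ∏ i, A n i i with hPdef
  have hP : 0 < P := Finset.prod_pos fun i _ => hdpos i
  have hoffb : ∀ i j : Fin q, i ≠ j → |A n i j| ≤ r * A n j j := by
    intro i j hij
    have h1 : |A n i j| * L ≤ δ * r := by
      have := hO i j hij
      rwa [abs_mul, abs_of_pos hL0] at this
    have h2 : |A n i j| ≤ r * (δ / L) := by
      have heq : r * (δ / L) = δ * r / L := by ring
      rw [heq, le_div_iff₀ hL0]
      exact h1
    exact h2.trans (mul_le_mul_of_nonneg_left (hdiag j) hr0.le)
  have key : ∀ σ : Equiv.Perm (Fin q), σ ≠ 1 → |∏ i, A n (σ i) i| ≤ r ^ 2 * P := by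
    intro σ hσ
    rw [Finset.abs_prod]
    calc ∏ i, |A n (σ i) i|
        ≤ ∏ i, ((if σ i = i then 1 else r) * A n i i) := by
          refine Finset.prod_le_prod (fun i _ => abs_nonneg _) (fun i _ => ?_)
          by_cases h : σ i = i
          · rw [if_pos h, h, abs_of_pos (hdpos i), one_mul]
          · rw [if_neg h]; exact hoffb (σ i) i h
      _ = (∏ i, (if σ i = i then 1 else r)) * P := Finset.prod_mul_distrib
      _ ≤ r ^ 2 * P := by
          apply mul_le_mul_of_nonneg_right _ hP.le
          rw [Finset.prod_ite, Finset.prod_const_one, one_mul, Finset.prod_const]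
          have hc : 2 ≤ (Finset.univ.filter fun i => ¬ σ i = i).card := by
            have h2 := Equiv.Perm.one_lt_card_support_of_ne_one hσ
            have : σ.support = Finset.univ.filter fun i => ¬ σ i = i := by
              ext x; simp [Equiv.Perm.mem_support]
            rw [← this]
            exact h2
          exact pow_le_pow_of_le_one hr0.le hr1 hc
  have hdet : |(A n).det - P| ≤ (1/2) * P := by
    have hexp : (A n).det = (∑ σ ∈ Finset.univ.erase (1 : Equiv.Perm (Fin q)),
        ((Equiv.Perm.sign σ : ℤ) : ℝ) * ∏ i, A n (σ i) i) + P := by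
      rw [Matrix.det_apply']
      rw [← Finset.sum_erase_add _ _ (Finset.mem_univ (1 : Equiv.Perm (Fin q)))]
      congr 1
      simp [hPdef]
    rw [hexp, add_sub_cancel_right]
    calc |∑ σ ∈ Finset.univ.erase (1 : Equiv.Perm (Fin q)),
          ((Equiv.Perm.sign σ : ℤ) : ℝ) * ∏ i, A n (σ i) i|
        ≤ ∑ σ ∈ Finset.univ.erase (1 : Equiv.Perm (Fin q)),
          |((Equiv.Perm.sign σ : ℤ) : ℝ) * ∏ i, A n (σ i) i| := Finset.abs_sum_le_sum_abs _ _
      _ ≤ ∑ σ ∈ Finset.univ.erase (1 : Equiv.Perm (Fin q)), r ^ 2 * P := by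
          refine Finset.sum_le_sum fun σ hσ => ?_
          have hσ1 : σ ≠ 1 := Finset.ne_of_mem_erase hσ
          rw [abs_mul]
          have hsign : |((Equiv.Perm.sign σ : ℤ) : ℝ)| = 1 := by
            rcases Int.units_eq_one_or (Equiv.Perm.sign σ) with h | h <;> simp [h]
          rw [hsign, one_mul]
          exact key σ hσ1
      _ = ((Finset.univ.erase (1 : Equiv.Perm (Fin q))).card : ℝ) * (r ^ 2 * P) := by
          rw [Finset.sum_const, nsmul_eq_mul]
      _ ≤ (q.factorial : ℝ) * (r ^ 2 * P) := by
          refine mul_le_mul_of_nonneg_right ?_ (by positivity)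
          have h1 : (Finset.univ.erase (1 : Equiv.Perm (Fin q))).card ≤
              Fintype.card (Equiv.Perm (Fin q)) :=
            le_trans (Finset.card_erase_le) (le_of_eq (Finset.card_univ))
          have h2 : Fintype.card (Equiv.Perm (Fin q)) = q.factorial := by
            rw [Fintype.card_perm, Fintype.card_fin]
          exact_mod_cast h1.trans_eq h2
      _ ≤ (1/2) * P := by
          nlinarith [mul_le_mul_of_nonneg_right hfac (mul_nonneg hr0.le hP.le),
            mul_le_mul_of_nonneg_right hr1 hP.le, hP.le, hr0.le]
  constructor
  · have h1 : |P| - |(A n).det - P| ≤ |(A n).det| := by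
      have := abs_sub_abs_le_abs_sub P ((A n).det)
      rw [abs_sub_comm] at this
      linarith
    rw [abs_of_pos hP] at h1
    linarith
  · have h2 : |(A n).det| ≤ |(A n).det - P| + |P| := by
      have := abs_add_le ((A n).det - P) P
      simpa using this
    rw [abs_of_pos hP] at h2
    linarith
end
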